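/- If Π is a deduction showing Γ_At;Δ_At ⊢*_B p, then (Π)^D is a deduction showing Δ_At;Γ_At ⊢*ᴰ_{(B)^D} p, where (+)^D = − and (−)^D = +. -/

import Mathlib

/-- Signs: `pos` for proof/assertion, `neg` for refutation/rejection. -/
inductive Sign where
  | pos
  | neg
deriving DecidableEq

/-- The dual of a sign. -/
def Sign.dual : Sign → Sign
  | .pos => .neg
  | .neg => .pos

/-- A premise of an atomic rule: the sign required (proof or refutation), the premise atom,
and the sets of dischargeable atomic proof assumptions and refutation assumptions. -/
structure Premise where
  sign : Sign
  concl : ℕ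
  dischargePf : Set ℕ
  dischargeRf : Set ℕ

/-- An atomic rule: a list of premises, a marking as proof (`pos`) or refutation (`neg`) rule,
and an atomic conclusion. -/
structure AtomicRule where
  prems : List Premise
  sign : Sign
  concl : ℕ

/-- A bilateral atomic system (base) is a set of atomic rules. -/
abbrev Base := Set AtomicRule

/-- Dual of a premise. -/
def Premise.dual (pr : Premise) : Premise :=
  ⟨pr.sign.dual, pr.concl, pr.dischargeRf, pr.dischargePf⟩

/-- Dual of an atomic rule. -/
def AtomicRule.dual (R : AtomicRule) : AtomicRule :=
  ⟨R.prems.map Premise.dual, R.sign.dual, R.concl⟩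

/-- Dual of a base. -/
def Base.dual (B : Base) : Base := AtomicRule.dual '' B

/-- Atomic deductions as trees. -/
inductive Ded where
  | hyp : Sign → ℕ → Ded
  | app : AtomicRule → List Ded → Ded

/-- Dual of an atomic deduction. -/
def Ded.dual : Ded → Ded
  | .hyp s p => .hyp s.dual p
  | .app R ds => .app R.dual (ds.attach.map fun d => Ded.dual d.1)
decreasing_by
  have := List.sizeOf_lt_of_mem d.2
  simp only [Ded.app.sizeOf_spec]
  omega

/-- `ValidDed B d s Γ Δ p`: the deduction tree `d` is a deduction in `B` of `p` of sign `s`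
with open proof assumptions in `Γ` and open refutation assumptions in `Δ`. -/
inductive ValidDed (B : Base) : Ded → Sign → Set ℕ → Set ℕ → ℕ → Prop
  | hypPos {Γ Δ : Set ℕ} {p : ℕ} : p ∈ Γ → ValidDed B (.hyp .pos p) .pos Γ Δ p
  | hypNeg {Γ Δ : Set ℕ} {p : ℕ} : p ∈ Δ → ValidDed B (.hyp .neg p) .neg Γ Δ p
  | app {Γ Δ : Set ℕ} {R : AtomicRule} {ds : List Ded} (hR : R ∈ B)
      (hlen : ds.length = R.prems.length)
      (h : ∀ i : Fin R.prems.length,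
        ValidDed B (ds.get (Fin.cast hlen.symm i)) (R.prems.get i).sign
          (Γ ∪ (R.prems.get i).dischargePf) (Δ ∪ (R.prems.get i).dischargeRf)
          (R.prems.get i).concl) :
      ValidDed B (.app R ds) R.sign Γ Δ R.concl

namespace Ded

@[simp]
theorem dual_hyp (s : Sign) (p : ℕ) : (hyp s p).dual = hyp s.dual p := by
  rw [Ded.dual]

@[simp]
theorem dual_app (R : AtomicRule) (ds : List Ded) :
    (app R ds).dual = app R.dual (ds.map dual) := by
  rw [Ded.dual, List.attach_map_val]

end Ded

@[simp]
theorem AtomicRule.dual_prems (R : AtomicRule) : R.dual.prems = R.prems.map Premise.dual := rfl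

theorem AtomicRule.dual_mem_dual {B : Base} {R : AtomicRule} (hR : R ∈ B) : R.dual ∈ B.dual :=
  Set.mem_image_of_mem _ hR

theorem ValidDed.app_of_getElem {B : Base} {Γ Δ : Set ℕ} {R : AtomicRule} {ds : List Ded}
    (hR : R ∈ B) (hlen : ds.length = R.prems.length)
    (h : ∀ i (hi : i < R.prems.length), ValidDed B (ds[i]'(hlen ▸ hi)) R.prems[i].sign
      (Γ ∪ R.prems[i].dischargePf) (Δ ∪ R.prems[i].dischargeRf) R.prems[i].concl) :
    ValidDed B (.app R ds) R.sign Γ Δ R.concl :=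
  .app hR hlen fun i => h i i.2

theorem dual_deduction_derivability (B : Base) (d : Ded) (s : Sign) (Γa Δa : Set ℕ) (p : ℕ)
    (h : ValidDed B d s Γa Δa p) :
    ValidDed (Base.dual B) (Ded.dual d) (Sign.dual s) Δa Γa p := by
  induction h with
  | hypPos hp => rw [Ded.dual_hyp]; exact .hypNeg hp
  | hypNeg hp => rw [Ded.dual_hyp]; exact .hypPos hp
  | @app _ _ R ds hR hlen _ ih =>
    rw [Ded.dual_app]
    refine .app_of_getElem (R := R.dual) (AtomicRule.dual_mem_dual hR) (by simp [hlen])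
      fun i hi => ?_
    have hi' : i < R.prems.length := by simpa using hi
    simpa [Premise.dual] using ih ⟨i, hi'⟩
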